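/- arXiv:2305.02479 — 4 statements merged into one kernel-verified Lean document; each statement's English description precedes it below -/
import Mathlib

section
/- Let r, k be integers with r ≥ 2k+3, k ≥ 1. Suppose nonnegative rationals c_i indexed by tuples i = (i_0,...,i_k) with 0 ≤ i_0 ≤ ... ≤ i_k ≤ 2 satisfy: (a) Σ c_i = 1; (b) Σ_{i_0 > 0} c_i · ∏_{j=0}^k (i_j + j) = (k+2)!·(r+1)(r−k−1)/(r²+r−2k−2); (c) c_{(2,...,2)} = (r²−2kr−r)/(r²+r−2k−2). Then c_{(1,2,...,2)} = 2(k+1)(r−1)/(r²+r−2k−2) and all other c_i with i_0 ≥ 1, i ≠ (2,...,2), (1,2,...,2) vanish. -/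
open Finset

lemma bs_prod_two (n : ℕ) :
    ∏ j ∈ Finset.range n, ((j : ℚ) + 2) = (Nat.factorial (n + 1) : ℚ) := by
  induction n with
  | zero => simp
  | succ n ih =>
    rw [Finset.prod_range_succ, ih, show n + 1 + 1 = (n + 1) + 1 from rfl,
      Nat.factorial_succ (n + 1)]
    push_cast; ring

lemma bs_prod_three (n : ℕ) :
    ∏ j ∈ Finset.range n, ((j : ℚ) + 3) = (Nat.factorial (n + 2) : ℚ) / 2 := by
  induction n with
  | zero => simp [Nat.factorial]
  | succ n ih =>
    rw [Finset.prod_range_succ, ih, show n + 1 + 2 = (n + 2) + 1 from rfl,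
      Nat.factorial_succ (n + 2)]
    push_cast; ring

/-- The product `∏ (i_j + j)` over the indices. -/
def bsP (k : ℕ) (i : Fin (k + 1) → Fin 3) : ℚ :=
  ∏ j : Fin (k + 1), (((i j : ℕ) : ℚ) + ((j : ℕ) : ℚ))

lemma bsP_e2 (k : ℕ) : bsP k (fun _ => 2) = (Nat.factorial (k + 2) : ℚ) := by
  have h1 : bsP k (fun _ => 2) = ∏ j : Fin (k + 1), (((j : ℕ) : ℚ) + 2) := by
    refine Finset.prod_congr rfl fun j _ => ?_
    rw [show (((2 : Fin 3) : ℕ)) = 2 from rfl]; push_cast; ring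
  rw [h1, Fin.prod_univ_eq_prod_range (fun n => ((n : ℚ) + 2)) (k + 1), bs_prod_two]

lemma bsP_e1 (k : ℕ) :
    bsP k (fun j => if j = 0 then 1 else 2) = (Nat.factorial (k + 2) : ℚ) / 2 := by
  have h1 : bsP k (fun j => if j = 0 then 1 else 2)
      = ∏ j : Fin (k + 1), ((if (j : ℕ) = 0 then (1 : ℚ) else 2) + ((j : ℕ) : ℚ)) := by
    refine Finset.prod_congr rfl fun j _ => ?_
    by_cases hj : j = 0
    · subst hj; norm_num [show (((1 : Fin 3) : ℕ)) = 1 from rfl]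
    · have hj' : (j : ℕ) ≠ 0 := by
        exact Fin.val_ne_zero_iff.mpr hj
      simp [hj, hj', show (((2 : Fin 3) : ℕ)) = 2 from rfl]
  rw [h1, Fin.prod_univ_eq_prod_range (fun n => ((if n = 0 then (1 : ℚ) else 2) + (n : ℚ)))
    (k + 1), Finset.prod_range_succ']
  simp only [Nat.succ_ne_zero, if_false, if_true, eq_self_iff_true, Nat.cast_zero, add_zero,
    mul_one]
  have h2 : ∀ m ∈ Finset.range k, ((2 : ℚ) + ((m + 1 : ℕ) : ℚ)) = ((m : ℚ) + 3) := by
    intro m _; push_cast; ring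
  rw [Finset.prod_congr rfl h2, bs_prod_three]

lemma bsP_le (k : ℕ) (i : Fin (k + 1) → Fin 3) (h0 : i 0 = 1) :
    bsP k i ≤ bsP k (fun j => if j = 0 then 1 else 2) := by
  unfold bsP
  refine Finset.prod_le_prod (fun j _ => ?_) (fun j _ => ?_)
  · by_cases hj : j = 0
    · subst hj; rw [h0]; norm_num [show (((1 : Fin 3) : ℕ)) = 1 from rfl]
    · have hj' : 1 ≤ (j : ℕ) := Nat.pos_of_ne_zero (Fin.val_ne_zero_iff.mpr hj)
      have h1 : (1 : ℚ) ≤ ((j : ℕ) : ℚ) := by exact_mod_cast hj'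
      have h2 : (0 : ℚ) ≤ ((i j : ℕ) : ℚ) := by positivity
      linarith
  · by_cases hj : j = 0
    · subst hj; rw [h0]; norm_num [show (((1 : Fin 3) : ℕ)) = 1 from rfl]
    · have h1 : ((i j : ℕ) : ℚ) ≤ 2 := by
        have := (i j).isLt
        exact_mod_cast Nat.lt_succ_iff.mp this
      simp only [hj, if_false]
      have : (((2 : Fin 3) : ℕ) : ℚ) = 2 := by norm_num [show (((2 : Fin 3) : ℕ)) = 2 from rfl]
      rw [this]
      linarith

lemma bsP_pos (k : ℕ) (i : Fin (k + 1) → Fin 3) (h0 : i 0 = 1) (j : Fin (k + 1)) :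
    0 < ((i j : ℕ) : ℚ) + ((j : ℕ) : ℚ) := by
  by_cases hj : j = 0
  · subst hj; rw [h0]; norm_num [show (((1 : Fin 3) : ℕ)) = 1 from rfl]
  · have hj' : 1 ≤ (j : ℕ) := Nat.pos_of_ne_zero (Fin.val_ne_zero_iff.mpr hj)
    have h1 : (1 : ℚ) ≤ ((j : ℕ) : ℚ) := by exact_mod_cast hj'
    have h2 : (0 : ℚ) ≤ ((i j : ℕ) : ℚ) := by positivity
    linarith

lemma bsP_lt (k : ℕ) (i : Fin (k + 1) → Fin 3) (h0 : i 0 = 1)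
    (hne : i ≠ fun j => if j = 0 then 1 else 2) :
    bsP k i < bsP k (fun j => if j = 0 then 1 else 2) := by
  obtain ⟨m, hm⟩ : ∃ m, i m ≠ (fun j => if j = 0 then (1 : Fin 3) else 2) m := by
    by_contra h
    push_neg at h
    exact hne (funext h)
  have hm0 : m ≠ 0 := by
    intro h; subst h; simp only [if_pos rfl] at hm; exact hm h0
  simp only [hm0, if_false] at hm
  unfold bsP
  refine Finset.prod_lt_prod (fun j _ => bsP_pos k i h0 j) ?_ ⟨m, Finset.mem_univ m, ?_⟩
  · intro j hj
    have := bsP_le k i h0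
    -- reuse pointwise bound
    by_cases hjz : j = 0
    · subst hjz; rw [h0]; norm_num [show (((1 : Fin 3) : ℕ)) = 1 from rfl]
    · have h1 : ((i j : ℕ) : ℚ) ≤ 2 := by
        have := (i j).isLt
        exact_mod_cast Nat.lt_succ_iff.mp this
      simp only [hjz, if_false]
      have h2 : (((2 : Fin 3) : ℕ) : ℚ) = 2 := by norm_num [show (((2 : Fin 3) : ℕ)) = 2 from rfl]
      rw [h2]; linarith
  · have hv : (i m : ℕ) ≠ 2 := by
      intro h; exact hm (Fin.ext (by rw [h]; rfl))
    have h1 : ((i m : ℕ) : ℚ) ≤ 1 := by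
      have := (i m).isLt
      have : (i m : ℕ) ≤ 1 := by omega
      exact_mod_cast this
    simp only [hm0, if_false]
    have h2 : (((2 : Fin 3) : ℕ) : ℚ) = 2 := by norm_num [show (((2 : Fin 3) : ℕ)) = 2 from rfl]
    rw [h2]; linarith

/-- Combinatorial core of the Boij–Söderberg decomposition for secant varieties
of genus 2 curves: nonnegative coefficients `c_i`, indexed by weakly increasing
tuples `i = (i_0,…,i_k)` with entries in `{0,1,2}`, summing to `1`, satisfying
the two corner constraints, must concentrate on `(2,…,2)` and `(1,2,…,2)`. -/
theorem boij_soederberg_coefficients (r k : ℕ) (hk : 1 ≤ k) (hr : 2 * k + 3 ≤ r)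
    (c : (Fin (k + 1) → Fin 3) → ℚ)
    (S : Finset (Fin (k + 1) → Fin 3))
    (hS : S = Finset.univ.filter (fun i => ∀ a b : Fin (k + 1), a ≤ b → i a ≤ i b))
    (hnonneg : ∀ i ∈ S, 0 ≤ c i)
    (hsum : ∑ i ∈ S, c i = 1)
    (hcorner : ∑ i ∈ S.filter (fun i => i 0 ≠ 0),
        c i * ∏ j : Fin (k + 1), (((i j : ℕ) : ℚ) + ((j : ℕ) : ℚ)) =
      (Nat.factorial (k + 2) : ℚ) * ((r : ℚ) + 1) * ((r : ℚ) - k - 1) /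
        ((r : ℚ) ^ 2 + r - 2 * k - 2))
    (htwo : c (fun _ => 2) =
      ((r : ℚ) ^ 2 - 2 * k * r - r) / ((r : ℚ) ^ 2 + r - 2 * k - 2)) :
    c (fun j => if j = 0 then 1 else 2) =
        2 * ((k : ℚ) + 1) * ((r : ℚ) - 1) / ((r : ℚ) ^ 2 + r - 2 * k - 2) ∧
      ∀ i ∈ S, i 0 ≠ 0 → i ≠ (fun _ => 2) → i ≠ (fun j => if j = 0 then 1 else 2) →
        c i = 0 := by
  classical
  set e2 : Fin (k + 1) → Fin 3 := fun _ => 2 with he2def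
  set e1 : Fin (k + 1) → Fin 3 := fun j => if j = 0 then 1 else 2 with he1def
  set T : Finset (Fin (k + 1) → Fin 3) := S.filter (fun i => i 0 ≠ 0) with hTdef
  set N : ℚ := (Nat.factorial (k + 2) : ℚ) with hNdef
  set D : ℚ := (r : ℚ) ^ 2 + r - 2 * k - 2 with hDdef
  have hN : (0 : ℚ) < N := by
    rw [hNdef]; exact_mod_cast Nat.factorial_pos (k + 2)
  have hrq : (2 * (k : ℚ) + 3) ≤ r := by exact_mod_cast hr
  have hkq : (1 : ℚ) ≤ k := by exact_mod_cast hk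
  have hD : (0 : ℚ) < D := by rw [hDdef]; nlinarith
  have hDne : D ≠ 0 := ne_of_gt hD
  -- memberships
  have he2S : e2 ∈ S := by
    rw [hS, he2def]; simp only [Finset.mem_filter, Finset.mem_univ, true_and]
    intro a b _; exact le_refl _
  have he1S : e1 ∈ S := by
    rw [hS, he1def]; simp only [Finset.mem_filter, Finset.mem_univ, true_and]
    intro a b hab
    by_cases hb : b = 0
    · have ha : a = 0 := le_antisymm (hb ▸ hab) (Fin.zero_le a)
      simp [ha, hb]
    · simp only [hb, if_false]
      by_cases ha : a = 0 <;> simp [ha]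
  have he2T : e2 ∈ T := by
    rw [hTdef]; refine Finset.mem_filter.mpr ⟨he2S, ?_⟩
    rw [he2def]
    intro h
    have := congrArg Fin.val h
    simp at this
  have he1T : e1 ∈ T := by
    rw [hTdef]; refine Finset.mem_filter.mpr ⟨he1S, ?_⟩
    rw [he1def]
    intro h
    simp only [if_pos rfl] at h
    have := congrArg Fin.val h
    simp at this
  have hne12 : e1 ≠ e2 := by
    intro h
    have := congrFun h 0
    rw [he1def, he2def] at this
    simp only [if_pos rfl] at this
    exact absurd this (by decide)
  -- i ∈ T, i ≠ e2 implies i 0 = 1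
  have hi01 : ∀ i ∈ T, i ≠ e2 → i 0 = 1 := by
    intro i hiT hne2
    rw [hTdef] at hiT
    obtain ⟨hiS, h0⟩ := Finset.mem_filter.mp hiT
    have hmono : ∀ a b : Fin (k + 1), a ≤ b → i a ≤ i b := by
      rw [hS] at hiS
      exact (Finset.mem_filter.mp hiS).2
    have h0' : (i 0 : ℕ) ≠ 0 := by
      intro h; exact h0 (Fin.ext h)
    by_contra hne1
    have hne1' : (i 0 : ℕ) ≠ 1 := by
      intro h; exact hne1 (Fin.ext (by rw [h]; rfl))
    have h2 : (i 0 : ℕ) = 2 := by have := (i 0).isLt; omega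
    apply hne2
    funext j
    have hle := hmono 0 j (Fin.zero_le j)
    rw [Fin.le_def, h2] at hle
    have := (i j).isLt
    rw [he2def]
    exact Fin.ext (by simp; omega)
  -- the corner sum in terms of bsP
  have hcorner' : ∑ i ∈ T, c i * bsP k i = N * ((r : ℚ) + 1) * ((r : ℚ) - k - 1) / D :=
    hcorner
  have hsplit : ∑ i ∈ T, c i * bsP k i = c e2 * N + ∑ i ∈ T.erase e2, c i * bsP k i := by
    rw [← Finset.add_sum_erase T (fun i => c i * bsP k i) he2T]
    rw [show bsP k e2 = N from by rw [he2def, hNdef]; exact bsP_e2 k]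
  have hkey : ∑ i ∈ T.erase e2, c i * bsP k i
      = N / 2 * (2 * ((k : ℚ) + 1) * ((r : ℚ) - 1) / D) := by
    have h1 : ∑ i ∈ T.erase e2, c i * bsP k i
        = N * ((r : ℚ) + 1) * ((r : ℚ) - k - 1) / D
          - ((r : ℚ) ^ 2 - 2 * k * r - r) / D * N := by
      rw [← hcorner', hsplit, htwo]; ring
    rw [h1]; field_simp; ring
  have hB : (1 : ℚ) - ((r : ℚ) ^ 2 - 2 * k * r - r) / D
      = 2 * ((k : ℚ) + 1) * ((r : ℚ) - 1) / D := by
    field_simp; ring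
  have hTsub : T ⊆ S := by rw [hTdef]; exact Finset.filter_subset _ _
  have hcle : ∑ i ∈ T.erase e2, c i ≤ 2 * ((k : ℚ) + 1) * ((r : ℚ) - 1) / D := by
    have h1 : c e2 + ∑ i ∈ T.erase e2, c i = ∑ i ∈ T, c i :=
      Finset.add_sum_erase T c he2T
    have h2 : ∑ i ∈ T, c i ≤ ∑ i ∈ S, c i :=
      Finset.sum_le_sum_of_subset_of_nonneg hTsub (fun i hi _ => hnonneg i hi)
    rw [hsum] at h2
    rw [← hB, ← htwo]
    linarith
  have hPle : ∀ i ∈ T.erase e2, bsP k i ≤ N / 2 := by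
    intro i hi
    have h0 : i 0 = 1 := hi01 i (Finset.mem_of_mem_erase hi) (Finset.ne_of_mem_erase hi)
    have := bsP_le k i h0
    rw [← he1def] at this
    rwa [show bsP k e1 = N / 2 from by rw [he1def, hNdef]; exact bsP_e1 k] at this
  have hup : ∑ i ∈ T.erase e2, c i * bsP k i ≤ N / 2 * ∑ i ∈ T.erase e2, c i := by
    rw [Finset.mul_sum]
    refine Finset.sum_le_sum fun i hi => ?_
    have hc := hnonneg i (hTsub (Finset.mem_of_mem_erase hi))
    calc c i * bsP k i ≤ c i * (N / 2) := mul_le_mul_of_nonneg_left (hPle i hi) hc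
      _ = N / 2 * c i := mul_comm _ _
  have hcB : ∑ i ∈ T.erase e2, c i = 2 * ((k : ℚ) + 1) * ((r : ℚ) - 1) / D := by
    refine le_antisymm hcle ?_
    have hN2 : (0 : ℚ) < N / 2 := by linarith
    have := hkey ▸ hup
    exact le_of_mul_le_mul_left this hN2
  have hzero : ∀ i ∈ T.erase e2, c i * (N / 2 - bsP k i) = 0 := by
    have hsum0 : ∑ i ∈ T.erase e2, c i * (N / 2 - bsP k i) = 0 := by
      have : ∑ i ∈ T.erase e2, c i * (N / 2 - bsP k i)
          = N / 2 * (∑ i ∈ T.erase e2, c i) - ∑ i ∈ T.erase e2, c i * bsP k i := by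
        rw [Finset.mul_sum, ← Finset.sum_sub_distrib]
        exact Finset.sum_congr rfl fun i _ => by ring
      rw [this, hcB, hkey]
      ring
    intro i hi
    refine (Finset.sum_eq_zero_iff_of_nonneg ?_).mp hsum0 i hi
    intro j hj
    have hc := hnonneg j (hTsub (Finset.mem_of_mem_erase hj))
    have := hPle j hj
    have : (0 : ℚ) ≤ N / 2 - bsP k j := by linarith
    positivity
  -- the vanishing statement
  have hvanish : ∀ i ∈ S, i 0 ≠ 0 → i ≠ e2 → i ≠ e1 → c i = 0 := by
    intro i hiS h0 hne2 hne1
    have hiT : i ∈ T := by rw [hTdef]; exact Finset.mem_filter.mpr ⟨hiS, h0⟩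
    have hi' : i ∈ T.erase e2 := Finset.mem_erase.mpr ⟨hne2, hiT⟩
    have h01 : i 0 = 1 := hi01 i hiT hne2
    have hlt : bsP k i < N / 2 := by
      have := bsP_lt k i h01 (by rw [← he1def]; exact hne1)
      rw [← he1def] at this
      rwa [show bsP k e1 = N / 2 from by rw [he1def, hNdef]; exact bsP_e1 k] at this
    have hz := hzero i hi'
    rcases mul_eq_zero.mp hz with h | h
    · exact h
    · exfalso; have : bsP k i = N / 2 := by linarith [sub_eq_zero.mp h]
      linarith
  refine ⟨?_, hvanish⟩
  -- the value at e1
  have he1T' : e1 ∈ T.erase e2 := Finset.mem_erase.mpr ⟨hne12, he1T⟩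
  have hsplit1 : c e1 + ∑ i ∈ (T.erase e2).erase e1, c i = ∑ i ∈ T.erase e2, c i :=
    Finset.add_sum_erase _ c he1T'
  have hrest : ∑ i ∈ (T.erase e2).erase e1, c i = 0 := by
    refine Finset.sum_eq_zero fun i hi => ?_
    have h1 : i ≠ e1 := Finset.ne_of_mem_erase hi
    have h2 : i ≠ e2 := Finset.ne_of_mem_erase (Finset.mem_of_mem_erase hi)
    have hiT : i ∈ T := Finset.mem_of_mem_erase (Finset.mem_of_mem_erase hi)
    have hiS : i ∈ S := hTsub hiT
    have h0 : i 0 ≠ 0 := by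
      rw [hTdef] at hiT; exact (Finset.mem_filter.mp hiT).2
    exact hvanish i hiS h0 h2 h1
  rw [hrest, add_zero] at hsplit1
  rw [hsplit1, hcB]
end

section
/- Let k ≥ 1, r ≥ 2k+3, and 1 ≤ i ≤ r−2k−3. Set D = (r²+r−2k−2)·∏_{j=r−2k}^{r−k−2} j/(k+1)!, c₂ = (r²−2kr−r)/(r²+r−2k−2), c₁ = 2(k+1)(r−1)/(r²+r−2k−2), A = (r−2k−1)!/((i+k+1)(i−1)!(r−i−2k−3)!(r−i−k−1)(r−i−k)), B = (r−2k−1)!/((i+k+1)(i−1)!(r−i−2k−3)!(r−i−k−2)(r−i−k)). Then D·(c₂·A + c₁·B) = (r−k−2)!·[r³−(i+k+1)r²−(i+k+2)r+2(k+1)(i+k+1)] / ((k+1)!(i+k+1)(i−1)!(r−i−2k−3)!(r−i−k−2)(r−i−k−1)(r−i−k)). -/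
lemma prod_Icc_mul_factorial (a : ℕ) : ∀ b : ℕ, a ≤ b →
    (∏ j ∈ Finset.Icc (a + 1) b, j) * Nat.factorial a = Nat.factorial b := by
  intro b
  induction b with
  | zero => intro h; interval_cases a; simp
  | succ n ih =>
    intro h
    rcases Nat.lt_or_ge a (n + 1) with h' | h'
    · rw [Finset.prod_Icc_succ_top (by omega), mul_comm _ (n+1), mul_assoc,
        ih (by omega), Nat.factorial_succ]
    · have : a = n + 1 := by omega
      subst this; simp


/-- Closed-form computation of the linear-strand Betti numbers
`dim K_{i,k+1}(Σ_k, O_{Σ_k}(1))` of the k-th secant variety of a genus 2 curve,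
combining the two pure diagrams with their Boij–Söderberg coefficients and the
degree `D`. -/
theorem betti_number_closed_form (r k i : ℕ) (hk : 1 ≤ k) (hr : 2 * k + 3 ≤ r)
    (hi1 : 1 ≤ i) (hi2 : i ≤ r - 2 * k - 3)
    (D c₂ c₁ A B : ℚ)
    (hD : D = ((r : ℚ) ^ 2 + r - 2 * k - 2) *
        (∏ j ∈ Finset.Icc (r - 2 * k) (r - k - 2), (j : ℚ)) /
          (Nat.factorial (k + 1) : ℚ))
    (hc₂ : c₂ = ((r : ℚ) ^ 2 - 2 * k * r - r) / ((r : ℚ) ^ 2 + r - 2 * k - 2))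
    (hc₁ : c₁ = 2 * ((k : ℚ) + 1) * ((r : ℚ) - 1) / ((r : ℚ) ^ 2 + r - 2 * k - 2))
    (hA : A = (Nat.factorial (r - 2 * k - 1) : ℚ) /
        (((i : ℚ) + k + 1) * (Nat.factorial (i - 1) : ℚ) *
          (Nat.factorial (r - i - 2 * k - 3) : ℚ) * ((r : ℚ) - i - k - 1) *
          ((r : ℚ) - i - k)))
    (hB : B = (Nat.factorial (r - 2 * k - 1) : ℚ) /
        (((i : ℚ) + k + 1) * (Nat.factorial (i - 1) : ℚ) *
          (Nat.factorial (r - i - 2 * k - 3) : ℚ) * ((r : ℚ) - i - k - 2) *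
          ((r : ℚ) - i - k))) :
    D * (c₂ * A + c₁ * B) =
      (Nat.factorial (r - k - 2) : ℚ) *
          ((r : ℚ) ^ 3 - ((i : ℚ) + k + 1) * (r : ℚ) ^ 2 - ((i : ℚ) + k + 2) * r +
            2 * ((k : ℚ) + 1) * ((i : ℚ) + k + 1)) /
        ((Nat.factorial (k + 1) : ℚ) * ((i : ℚ) + k + 1) * (Nat.factorial (i - 1) : ℚ) *
          (Nat.factorial (r - i - 2 * k - 3) : ℚ) * ((r : ℚ) - i - k - 2) *
          ((r : ℚ) - i - k - 1) * ((r : ℚ) - i - k)) := by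
  have hik : i + (2 * k + 3) ≤ r := by omega
  have hxr : (2 * (k : ℚ) + 3) ≤ r := by exact_mod_cast hr
  have hyi : (i : ℚ) + (2 * k + 3) ≤ r := by exact_mod_cast hik
  have hF2 : (Nat.factorial (i - 1) : ℚ) ≠ 0 := Nat.cast_ne_zero.mpr (Nat.factorial_ne_zero _)
  have hF3 : (Nat.factorial (r - i - 2 * k - 3) : ℚ) ≠ 0 :=
    Nat.cast_ne_zero.mpr (Nat.factorial_ne_zero _)
  have hF4 : (Nat.factorial (k + 1) : ℚ) ≠ 0 := Nat.cast_ne_zero.mpr (Nat.factorial_ne_zero _)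
  have hF5 : (Nat.factorial (r - 2 * k - 1) : ℚ) ≠ 0 :=
    Nat.cast_ne_zero.mpr (Nat.factorial_ne_zero _)
  have hk' : (0 : ℚ) ≤ k := by positivity
  have hi' : (1 : ℚ) ≤ i := by exact_mod_cast hi1
  have h1 : ((i : ℚ) + k + 1) ≠ 0 := by positivity
  have h2 : ((r : ℚ) - i - k) ≠ 0 := by intro h; nlinarith
  have h3 : ((r : ℚ) - i - k - 1) ≠ 0 := by intro h; nlinarith
  have h4 : ((r : ℚ) - i - k - 2) ≠ 0 := by intro h; nlinarith
  have h5 : ((r : ℚ) ^ 2 + r - 2 * k - 2) ≠ 0 := by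
    have := sq_nonneg (r : ℚ); intro h; nlinarith
  have hn : (∏ j ∈ Finset.Icc (r - 2 * k) (r - k - 2), j) * Nat.factorial (r - 2 * k - 1) =
      Nat.factorial (r - k - 2) := by
    have := prod_Icc_mul_factorial (r - 2 * k - 1) (r - k - 2) (by omega)
    rwa [show r - 2 * k - 1 + 1 = r - 2 * k by omega] at this
  have hP : (∏ j ∈ Finset.Icc (r - 2 * k) (r - k - 2), (j : ℚ)) =
      (Nat.factorial (r - k - 2) : ℚ) / (Nat.factorial (r - 2 * k - 1) : ℚ) := by
    rw [eq_div_iff hF5, ← Nat.cast_prod]; exact_mod_cast hn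
  rw [hP] at hD
  subst hD hc₂ hc₁ hA hB
  field_simp
  rw [mul_div_cancel_left₀ _ (by intro h; apply h5; linarith)]
  ring
end

section
/- Let k ≥ 1, r ≥ 2k+3, and 1 ≤ i ≤ r−2k−3. Then the quantity (r−k−2)!·[r³ − (i+k+1)r² − (i+k+2)r + 2(k+1)(i+k+1)] / ((k+1)!(i+k+1)(i−1)!(r−i−2k−3)!(r−i−k−2)(r−i−k−1)(r−i−k)) is a positive integer. -/
private lemma chooseQ (a b : ℕ) :
    (((a + b).choose b : ℕ) : ℚ) * (a.factorial : ℚ) * (b.factorial : ℚ)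
      = ((a + b).factorial : ℚ) := by
  exact_mod_cast Nat.add_choose_mul_factorial_mul_factorial a b

private lemma factQne (m : ℕ) : ((m.factorial : ℕ) : ℚ) ≠ 0 :=
  Nat.cast_ne_zero.mpr m.factorial_pos.ne'

set_option maxHeartbeats 4000000 in
/-- The closed formula for the linear-strand Betti numbers
`dim K_{i,k+1}(Σ_k, O(1))` of the secant variety of a genus 2 curve is a
positive integer, for `k ≥ 1`, `r ≥ 2k+3` and `1 ≤ i ≤ r−2k−3`. -/
theorem betti_number_positive_integer (r k i : ℕ) (hk : 1 ≤ k) (hr : 2 * k + 3 ≤ r)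
    (hi1 : 1 ≤ i) (hi2 : i ≤ r - 2 * k - 3) :
    ∃ m : ℕ, 0 < m ∧
      (Nat.factorial (r - k - 2) : ℚ) *
          ((r : ℚ) ^ 3 - ((i : ℚ) + k + 1) * (r : ℚ) ^ 2 - ((i : ℚ) + k + 2) * r +
            2 * ((k : ℚ) + 1) * ((i : ℚ) + k + 1)) /
        ((Nat.factorial (k + 1) : ℚ) * ((i : ℚ) + k + 1) * (Nat.factorial (i - 1) : ℚ) *
          (Nat.factorial (r - i - 2 * k - 3) : ℚ) * ((r : ℚ) - i - k - 2) *
          ((r : ℚ) - i - k - 1) * ((r : ℚ) - i - k)) = (m : ℚ) := by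
  obtain ⟨j, rfl⟩ : ∃ j, i = j + 1 := ⟨i - 1, by omega⟩
  obtain ⟨n, rfl⟩ : ∃ n, r = n + j + 2 * k + 4 := ⟨r - (j + 2 * k + 4), by omega⟩
  have e1 : n + j + 2 * k + 4 - k - 2 = n + j + k + 2 := by omega
  have e2 : j + 1 - 1 = j := by omega
  have e3 : n + j + 2 * k + 4 - (j + 1) - 2 * k - 3 = n := by omega
  rw [e1, e2, e3]
  have l1 : ((n + j + 2 * k + 4 : ℕ) : ℚ) - ((j + 1 : ℕ) : ℚ) - (k : ℚ) - 2
      = (n : ℚ) + (k : ℚ) + 1 := by push_cast; ring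
  have l2 : ((n + j + 2 * k + 4 : ℕ) : ℚ) - ((j + 1 : ℕ) : ℚ) - (k : ℚ) - 1
      = (n : ℚ) + (k : ℚ) + 2 := by push_cast; ring
  have l3 : ((n + j + 2 * k + 4 : ℕ) : ℚ) - ((j + 1 : ℕ) : ℚ) - (k : ℚ)
      = (n : ℚ) + (k : ℚ) + 3 := by push_cast; ring
  rw [l1, l2, l3]
  -- factorial quotient forms of the binomial coefficients
  have hq1 : (((n + j + k + 2).choose (j + k + 2) : ℕ) : ℚ)
      = ((n + j + k + 2).factorial : ℚ)
        / ((n.factorial : ℚ) * ((j + k + 2).factorial : ℚ)) := by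
    rw [eq_div_iff (mul_ne_zero (factQne n) (factQne (j + k + 2)))]
    have h := chooseQ n (j + k + 2)
    rw [show n + (j + k + 2) = n + j + k + 2 by ring] at h
    linear_combination h
  have hq2 : (((j + k + 1).choose (k + 1) : ℕ) : ℚ)
      = ((j + k + 1).factorial : ℚ)
        / ((j.factorial : ℚ) * ((k + 1).factorial : ℚ)) := by
    rw [eq_div_iff (mul_ne_zero (factQne j) (factQne (k + 1)))]
    have h := chooseQ j (k + 1)
    rw [show j + (k + 1) = j + k + 1 by ring] at h
    linear_combination h
  have hq3 : (((n + k).choose k : ℕ) : ℚ)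
      = ((n + k).factorial : ℚ) / ((n.factorial : ℚ) * (k.factorial : ℚ)) := by
    rw [eq_div_iff (mul_ne_zero (factQne n) (factQne k))]
    linear_combination chooseQ n k
  have hq4 : (((n + j + k + 2).choose j : ℕ) : ℚ)
      = ((n + j + k + 2).factorial : ℚ)
        / (((n + k + 2).factorial : ℚ) * (j.factorial : ℚ)) := by
    rw [eq_div_iff (mul_ne_zero (factQne (n + k + 2)) (factQne j))]
    have h := chooseQ (n + k + 2) j
    rw [show n + k + 2 + j = n + j + k + 2 by ring] at h
    linear_combination h
  have hq5 : (((n + k + 1).choose (k + 1) : ℕ) : ℚ)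
      = ((n + k + 1).factorial : ℚ)
        / ((n.factorial : ℚ) * ((k + 1).factorial : ℚ)) := by
    rw [eq_div_iff (mul_ne_zero (factQne n) (factQne (k + 1)))]
    have h := chooseQ n (k + 1)
    rw [show n + (k + 1) = n + k + 1 by ring] at h
    linear_combination h
  have hq6 : (((n + j + k + 3).choose j : ℕ) : ℚ)
      = ((n + j + k + 3).factorial : ℚ)
        / (((n + k + 3).factorial : ℚ) * (j.factorial : ℚ)) := by
    rw [eq_div_iff (mul_ne_zero (factQne (n + k + 3)) (factQne j))]
    have h := chooseQ (n + k + 3) j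
    rw [show n + k + 3 + j = n + j + k + 3 by ring] at h
    linear_combination h
  -- successor expansions of factorials
  have hf1 : (((j + k + 2).factorial : ℕ) : ℚ)
      = ((j : ℚ) + (k : ℚ) + 2) * ((j + k + 1).factorial : ℚ) := by
    rw [show j + k + 2 = (j + k + 1) + 1 from rfl, Nat.factorial_succ]
    push_cast; ring
  have hf2 : (((k + 1).factorial : ℕ) : ℚ) = ((k : ℚ) + 1) * (k.factorial : ℚ) := by
    rw [Nat.factorial_succ]; push_cast; ring
  have hf3 : (((n + k + 1).factorial : ℕ) : ℚ)
      = ((n : ℚ) + (k : ℚ) + 1) * ((n + k).factorial : ℚ) := by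
    rw [show n + k + 1 = (n + k) + 1 from rfl, Nat.factorial_succ]
    push_cast; ring
  have hf4 : (((n + k + 2).factorial : ℕ) : ℚ)
      = ((n : ℚ) + (k : ℚ) + 2) * ((n + k + 1).factorial : ℚ) := by
    rw [show n + k + 2 = (n + k + 1) + 1 from rfl, Nat.factorial_succ]
    push_cast; ring
  have hf5 : (((n + k + 3).factorial : ℕ) : ℚ)
      = ((n : ℚ) + (k : ℚ) + 3) * ((n + k + 2).factorial : ℚ) := by
    rw [show n + k + 3 = (n + k + 2) + 1 from rfl, Nat.factorial_succ]
    push_cast; ring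
  have hf6 : (((n + j + k + 3).factorial : ℕ) : ℚ)
      = ((n : ℚ) + (j : ℚ) + (k : ℚ) + 3) * ((n + j + k + 2).factorial : ℚ) := by
    rw [show n + j + k + 3 = (n + j + k + 2) + 1 from rfl, Nat.factorial_succ]
    push_cast; ring
  -- the integer value
  set Z : ℤ :=
      ((n + j + k + 2).choose (j + k + 2) : ℤ) * ((j + k + 1).choose (k + 1) : ℤ)
      + ((n : ℤ) + k + 2) * ((n + k).choose k : ℤ) * ((n + j + k + 2).choose j : ℤ)
      + ((j : ℤ) + 1 - k) * ((n + k + 1).choose (k + 1) : ℤ)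
          * ((n + j + k + 2).choose j : ℤ)
      - ((n : ℤ) + k + 2) * ((n + k + 1).choose (k + 1) : ℤ)
          * (((n + j + k + 3).choose j : ℤ) - ((n + j + k + 2).choose j : ℤ)) with hZ
  -- positivity of Z
  have hW : (0 : ℚ) ≤ 2 * ((n : ℚ) + k + 2) * ((n : ℚ) + 2 * k + 2)
      + ((j : ℚ) + 1 - k) * ((n : ℚ) + k + 1) := by
    have hj : (0 : ℚ) ≤ (j : ℚ) := Nat.cast_nonneg j
    have hn : (0 : ℚ) ≤ (n : ℚ) := Nat.cast_nonneg n
    have hk1 : (1 : ℚ) ≤ (k : ℚ) := by exact_mod_cast hk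
    nlinarith [mul_nonneg hj (by linarith : (0 : ℚ) ≤ (n : ℚ) + k + 1),
      mul_nonneg hn hn, mul_nonneg hn (by linarith : (0 : ℚ) ≤ (k : ℚ)),
      mul_nonneg (by linarith : (0 : ℚ) ≤ (k : ℚ)) (by linarith : (0 : ℚ) ≤ (k : ℚ))]
  have hS : ((Z : ℤ) : ℚ)
      - (((n + j + k + 2).choose (j + k + 2) : ℕ) : ℚ)
        * (((j + k + 1).choose (k + 1) : ℕ) : ℚ)
      = (((n + k).choose k : ℕ) : ℚ) * (((n + j + k + 2).choose j : ℕ) : ℚ)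
        * (2 * ((n : ℚ) + k + 2) * ((n : ℚ) + 2 * k + 2)
            + ((j : ℚ) + 1 - k) * ((n : ℚ) + k + 1))
        / (((k : ℚ) + 1) * ((n : ℚ) + k + 3)) := by
    rw [hZ]
    push_cast
    rw [hq1, hq2, hq3, hq4, hq5, hq6, hf6, hf5, hf4, hf3, hf1, hf2]
    have d1 : ((k : ℚ) + 1) ≠ 0 := by positivity
    have d2 : ((n : ℚ) + k + 3) ≠ 0 := by positivity
    have d3 : ((n : ℚ) + k + 1) ≠ 0 := by positivity
    have d4 : ((n : ℚ) + k + 2) ≠ 0 := by positivity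
    have d5 : ((j : ℚ) + k + 2) ≠ 0 := by positivity
    field_simp
    ring
  have hone : (1 : ℚ) ≤ (((n + j + k + 2).choose (j + k + 2) : ℕ) : ℚ)
      * (((j + k + 1).choose (k + 1) : ℕ) : ℚ) := by
    have h1 : 1 ≤ (n + j + k + 2).choose (j + k + 2) :=
      Nat.choose_pos (by omega)
    have h2 : 1 ≤ (j + k + 1).choose (k + 1) := Nat.choose_pos (by omega)
    exact_mod_cast Nat.one_le_iff_ne_zero.mpr (Nat.mul_ne_zero (by omega) (by omega))
  have hZpos : 0 < Z := by
    have hrhs : (0 : ℚ) ≤ (((n + k).choose k : ℕ) : ℚ)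
        * (((n + j + k + 2).choose j : ℕ) : ℚ)
        * (2 * ((n : ℚ) + k + 2) * ((n : ℚ) + 2 * k + 2)
            + ((j : ℚ) + 1 - k) * ((n : ℚ) + k + 1))
        / (((k : ℚ) + 1) * ((n : ℚ) + k + 3)) := by
      apply div_nonneg
      · exact mul_nonneg (mul_nonneg (Nat.cast_nonneg _) (Nat.cast_nonneg _)) hW
      · positivity
    have : (0 : ℚ) < ((Z : ℤ) : ℚ) := by
      rw [← sub_add_cancel ((Z : ℤ) : ℚ)
        ((((n + j + k + 2).choose (j + k + 2) : ℕ) : ℚ)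
          * (((j + k + 1).choose (k + 1) : ℕ) : ℚ))] at *
      linarith [hS ▸ hrhs]
    exact_mod_cast this
  refine ⟨Z.toNat, by omega, ?_⟩
  have hcast : ((Z.toNat : ℕ) : ℚ) = ((Z : ℤ) : ℚ) := by
    exact_mod_cast congrArg (fun z : ℤ => (z : ℚ)) (Int.toNat_of_nonneg hZpos.le)
  rw [hcast, hZ]
  push_cast
  rw [hq1, hq2, hq3, hq4, hq5, hq6, hf6, hf5, hf4, hf3, hf1, hf2]
  have d1 : ((k : ℚ) + 1) ≠ 0 := by positivity
  have d2 : ((n : ℚ) + k + 3) ≠ 0 := by positivity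
  have d3 : ((n : ℚ) + k + 1) ≠ 0 := by positivity
  have d4 : ((n : ℚ) + k + 2) ≠ 0 := by positivity
  have d5 : ((j : ℚ) + k + 2) ≠ 0 := by positivity
  have d6 : ((j : ℚ) + 1 + k + 1) ≠ 0 := by positivity
  field_simp
  ring
end

section
/- Let C be a smooth projective curve of genus g ≥ 1 with canonical bundle K_C, and L a very ample line bundle with H⁰(C, L − K_C) ≠ 0, embedding C in ℙ^r. Fix i ≤ g−1 with i ≥ 1, and fix linearly independent sections f_0, ..., f_i ∈ H⁰(C, K_C) and a nonzero s ∈ H⁰(C, L − K_C). Then for every nonzero F ∈ Sym^k H⁰(C, K_C), the element Σ_{j=0}^i (−1)^j f_0s ∧ ⋯ ∧ (f_js omitted) ∧ ⋯ ∧ f_is ⊗ F·f_j ∈ Λ^i H⁰(C, L) ⊗ Sym^{k+1} H⁰(C, K_C) is a nonzero element of the kernel of the Koszul differential Λ^i H⁰(L) ⊗ Sym^{k+1} H⁰(K_C) → Λ^{i−1} H⁰(L) ⊗ (H⁰(L) · Sym^k H⁰(K_C)). -/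
open scoped TensorProduct
open Module

namespace KoszulAux

lemma sa_val {n : ℕ} (p : Fin (n+1)) (i : Fin n) :
    ((p.succAbove i : Fin (n+1)) : ℕ) = if (i : ℕ) < p then (i : ℕ) else (i : ℕ) + 1 := by
  rw [Fin.succAbove]
  split_ifs with h1 h2 h2 <;>
    simp only [Fin.lt_def, Fin.coe_castSucc, Fin.val_succ] at h1 h2 ⊢ <;> omega

lemma pa_val {n : ℕ} (p : Fin n) (i : Fin (n+1)) :
    ((p.predAbove i : Fin n) : ℕ) = if (p : ℕ) < i then (i : ℕ) - 1 else (i : ℕ) := by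
  rw [Fin.predAbove]
  split_ifs with h1 h2 h2 <;>
    simp only [Fin.lt_def, Fin.coe_castSucc, Fin.coe_pred, Fin.coe_castPred] at h1 h2 ⊢ <;> omega

lemma finA {n : ℕ} (j : Fin (n+2)) (p : Fin (n+1)) :
    (j.succAbove p).succAbove (p.predAbove j) = j := by
  have hj := j.isLt; have hp := p.isLt
  apply Fin.ext
  simp only [sa_val, pa_val]
  split_ifs <;> omega

lemma finB {n : ℕ} (j : Fin (n+2)) (p : Fin (n+1)) :
    (p.predAbove j).predAbove (j.succAbove p) = p := by
  have hj := j.isLt; have hp := p.isLt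
  apply Fin.ext
  simp only [sa_val, pa_val]
  split_ifs <;> omega

lemma finC {n : ℕ} (j : Fin (n+2)) (p : Fin (n+1)) (q : Fin n) :
    (j.succAbove p).succAbove ((p.predAbove j).succAbove q) = j.succAbove (p.succAbove q) := by
  have hj := j.isLt; have hp := p.isLt; have hq := q.isLt
  apply Fin.ext
  simp only [sa_val, pa_val]
  split_ifs <;> omega

lemma finD {n : ℕ} (j : Fin (n+2)) (p : Fin (n+1)) :
    ((-1 : ℤ)) ^ ((j : ℕ) + (p : ℕ)) +
      (-1) ^ (((j.succAbove p : Fin (n+2)) : ℕ) + ((p.predAbove j : Fin (n+1)) : ℕ)) = 0 := by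
  have hj := j.isLt; have hp := p.isLt
  have key : (j : ℕ) + (p : ℕ) + 1
        = ((j.succAbove p : Fin (n+2)) : ℕ) + ((p.predAbove j : Fin (n+1)) : ℕ)
      ∨ ((j.succAbove p : Fin (n+2)) : ℕ) + ((p.predAbove j : Fin (n+1)) : ℕ) + 1
        = (j : ℕ) + (p : ℕ) := by
    simp only [sa_val, pa_val]
    split_ifs <;> omega
  rcases key with h | h <;> rw [← h] <;> ring

lemma exists_dual_family {K V ι : Type*} [Field K] [AddCommGroup V] [Module K V]
    [DecidableEq ι] {e : ι → V} (he : LinearIndependent K e) :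
    ∃ lam : ι → Module.Dual K V, ∀ i j, lam i (e j) = if j = i then 1 else 0 := by
  set W := Submodule.span K (Set.range e)
  set B : Basis ι K W := Basis.span he
  choose g hg using fun i => LinearMap.exists_extend (B.coord i)
  refine ⟨g, fun i j => ?_⟩
  have h1 : e j = W.subtype (B j) := by
    exact congrArg Subtype.val (Basis.span_apply he j).symm
  rw [h1, ← LinearMap.comp_apply, hg i, Basis.coord_apply, Basis.repr_self,
    Finsupp.single_apply]

end KoszulAux

set_option maxHeartbeats 4000000 in
set_option synthInstance.maxHeartbeats 2000000 in
/-- Non-vanishing Koszul class on the secant variety of a curve of genus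
`g ≥ 1`.  Abstract data: `H0K = H⁰(C, K_C)` (of dimension `g`),
`H0LK = H⁰(C, L−K_C)`, `H0L = H⁰(C, L)`, `Wk = Sym^k H⁰(K_C)`,
`W1 = Sym^{k+1} H⁰(K_C)`, `W2 = H⁰(L)·Sym^k H⁰(K_C)`, with the section
multiplication maps `μ`, `mulSym`, `act` (which are injective in each nonzero
section since the curve is integral, and commute appropriately).  Here the
index is `i = m+1` with `1 ≤ i ≤ g−1`, `f : Fin (i+1) → H0K` is a linearly
independent family, `s ∈ H⁰(L−K_C)` is nonzero, `ω n` sends an `n`-tuple to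
its wedge in `⋀^n H⁰(L)`, and `d` is the Koszul differential.  Then the class
`ξ = Σ_j (−1)^j (f_0 s)∧⋯∧(f_j s omitted)∧⋯∧(f_i s) ⊗ F·f_j` is a nonzero
element of the kernel of `d` for every nonzero `F ∈ Sym^k H⁰(K_C)`. -/
theorem koszul_class_nonzero_in_kernel (g k m : ℕ) (hg : 1 ≤ g)
    (him : m + 1 ≤ g - 1)
    (H0K H0LK H0L Wk W1 W2 : Type)
    [AddCommGroup H0K] [Module ℂ H0K] [AddCommGroup H0LK] [Module ℂ H0LK]
    [AddCommGroup H0L] [Module ℂ H0L] [AddCommGroup Wk] [Module ℂ Wk]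
    [AddCommGroup W1] [Module ℂ W1] [AddCommGroup W2] [Module ℂ W2]
    (hgenus : finrank ℂ H0K = g)
    (μ : H0K →ₗ[ℂ] H0LK →ₗ[ℂ] H0L)
    (mulSym : H0K →ₗ[ℂ] Wk →ₗ[ℂ] W1)
    (act : H0L →ₗ[ℂ] W1 →ₗ[ℂ] W2)
    (f : Fin (m + 2) → H0K) (hf : LinearIndependent ℂ f)
    (s : H0LK) (hs : s ≠ 0)
    (F : Wk) (hF : F ≠ 0)
    (hμinj : ∀ t : H0K, μ t s = 0 → t = 0)
    (hsyminj : ∀ a : H0K, a ≠ 0 → mulSym a F ≠ 0)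
    (hcomm : ∀ a b : H0K, act (μ a s) (mulSym b F) = act (μ b s) (mulSym a F))
    (ω : ∀ n : ℕ, (Fin n → H0L) → ⋀[ℂ]^n H0L)
    (hω : ∀ (n : ℕ) (v : Fin n → H0L),
      (ω n v : ExteriorAlgebra ℂ H0L) = ExteriorAlgebra.ιMulti ℂ n v)
    (d : (⋀[ℂ]^(m + 1) H0L) ⊗[ℂ] W1 →ₗ[ℂ] (⋀[ℂ]^m H0L) ⊗[ℂ] W2)
    (hd : ∀ (x : Fin (m + 1) → H0L) (M : W1),
      d (ω (m + 1) x ⊗ₜ[ℂ] M) =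
        ∑ p : Fin (m + 1), ((-1 : ℤ) ^ (p : ℕ)) •
          (ω m (fun q => x (p.succAbove q)) ⊗ₜ[ℂ] act (x p) M))
    (ξ : (⋀[ℂ]^(m + 1) H0L) ⊗[ℂ] W1)
    (hξ : ξ = ∑ j : Fin (m + 2), ((-1 : ℤ) ^ (j : ℕ)) •
        (ω (m + 1) (fun p => μ (f (j.succAbove p)) s) ⊗ₜ[ℂ] mulSym (f j) F)) :
    ξ ≠ 0 ∧ d ξ = 0 := by
  classical
  -- linear independence of the sections f j · s
  have he : LinearIndependent ℂ (fun j : Fin (m+2) => μ (f j) s) := by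
    have hker : LinearMap.ker (μ.flip s) = ⊥ := LinearMap.ker_eq_bot'.mpr hμinj
    exact hf.map' (μ.flip s) hker
  constructor
  · -- ξ ≠ 0
    obtain ⟨lam, hlam⟩ := KoszulAux.exists_dual_family he
    set A : H0L [⋀^Fin (m+1)]→ₗ[ℂ] ℂ :=
      (Matrix.detRowAlternating : (Fin (m+1) → ℂ) [⋀^Fin (m+1)]→ₗ[ℂ] ℂ).compLinearMap
        (LinearMap.pi fun t : Fin (m+1) => lam t.succ) with hA_def
    have hAdet : ∀ v : Fin (m+1) → H0L,
        A v = (Matrix.of fun i t : Fin (m+1) => lam t.succ (v i)).det := fun v => rfl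
    have hA0 : A (fun p => μ (f ((0 : Fin (m+2)).succAbove p)) s) = 1 := by
      rw [hAdet]
      have h1 : (Matrix.of fun i t : Fin (m+1) =>
          lam t.succ (μ (f ((0 : Fin (m+2)).succAbove i)) s)) = 1 := by
        ext i t
        rw [Matrix.of_apply, Fin.zero_succAbove, hlam, Matrix.one_apply]
        simp [Fin.succ_inj]
      rw [h1, Matrix.det_one]
    have hAj : ∀ j : Fin (m+2), j ≠ 0 →
        A (fun p => μ (f (j.succAbove p)) s) = 0 := by
      intro j hj
      rw [hAdet]
      apply Matrix.det_eq_zero_of_row_eq_zero 0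
      intro t
      have h0 : j.succAbove 0 = 0 := by
        apply Fin.ext
        rw [KoszulAux.sa_val]
        have : 0 < (j : ℕ) := Fin.pos_of_ne_zero hj
        simp [this]
      rw [Matrix.of_apply, h0, hlam]
      simp [(Fin.succ_ne_zero t).symm]
    -- lift the alternating form to the exterior power
    set φ : (⋀[ℂ]^(m+1) H0L) →ₗ[ℂ] ℂ :=
      (ExteriorAlgebra.liftAlternating
        (Function.update (fun _ => 0) (m+1) A)) ∘ₗ (Submodule.subtype _) with hφ_def
    have hφ : ∀ v : Fin (m+1) → H0L, φ (ω (m+1) v) = A v := by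
      intro v
      have h1 : ((ω (m+1) v : ⋀[ℂ]^(m+1) H0L) : ExteriorAlgebra ℂ H0L)
          = ExteriorAlgebra.ιMulti ℂ (m+1) v := hω _ v
      show ExteriorAlgebra.liftAlternating _ ((ω (m+1) v : ⋀[ℂ]^(m+1) H0L) :
        ExteriorAlgebra ℂ H0L) = A v
      rw [h1, ExteriorAlgebra.liftAlternating_apply_ιMulti, Function.update_self]
    -- a functional on W1 not vanishing on mulSym (f 0) F
    have h0 : mulSym (f 0) F ≠ 0 := hsyminj (f 0) (hf.ne_zero 0)
    obtain ⟨ψ, hψ⟩ : ∃ ψ : Module.Dual ℂ W1, ψ (mulSym (f 0) F) ≠ 0 := by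
      by_contra h
      push_neg at h
      exact h0 ((Module.forall_dual_apply_eq_zero_iff ℂ _).mp h)
    set Φ : (⋀[ℂ]^(m+1) H0L) ⊗[ℂ] W1 →ₗ[ℂ] ℂ :=
      (TensorProduct.lid ℂ ℂ).toLinearMap ∘ₗ TensorProduct.map φ ψ with hΦ_def
    have hΦtmul : ∀ (w : ⋀[ℂ]^(m+1) H0L) (u : W1), Φ (w ⊗ₜ[ℂ] u) = φ w * ψ u := by
      intro w u
      simp [hΦ_def, TensorProduct.map_tmul, TensorProduct.lid_tmul, smul_eq_mul]
    have hterm : ∀ j : Fin (m+2),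
        Φ (((-1:ℤ)^(j:ℕ)) • (ω (m+1) (fun p => μ (f (j.succAbove p)) s)
            ⊗ₜ[ℂ] mulSym (f j) F))
          = ((-1:ℤ)^(j:ℕ)) • (A (fun p => μ (f (j.succAbove p)) s) * ψ (mulSym (f j) F)) := by
      intro j
      rw [map_zsmul, hΦtmul, hφ]
    have key : Φ ξ = ψ (mulSym (f 0) F) := by
      rw [hξ, map_sum]
      rw [Finset.sum_eq_single_of_mem (0 : Fin (m+2)) (Finset.mem_univ _)]
      · rw [hterm, hA0, one_mul, Fin.val_zero, pow_zero, one_smul]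
      · intro j _ hj
        rw [hterm, hAj j hj, zero_mul, smul_zero]
    intro hzero
    rw [hzero, map_zero] at key
    exact hψ key.symm
  · -- d ξ = 0
    rw [hξ, map_sum]
    have hterm : ∀ j : Fin (m+2),
        d (((-1:ℤ)^(j:ℕ)) • (ω (m+1) (fun p => μ (f (j.succAbove p)) s)
            ⊗ₜ[ℂ] mulSym (f j) F))
          = ∑ p : Fin (m+1), ((-1:ℤ)^((j:ℕ)+(p:ℕ))) •
              (ω m (fun q => μ (f (j.succAbove (p.succAbove q))) s)
                ⊗ₜ[ℂ] act (μ (f (j.succAbove p)) s) (mulSym (f j) F)) := by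
      intro j
      rw [map_zsmul, hd, Finset.smul_sum]
      refine Finset.sum_congr rfl fun p _ => ?_
      rw [smul_smul, ← pow_add]
    rw [Finset.sum_congr rfl fun j _ => hterm j, ← Finset.sum_product']
    refine Finset.sum_ninvolution
      (fun a => (a.1.succAbove a.2, a.2.predAbove a.1)) ?_ ?_
      (fun a => Finset.mem_univ _) ?_
    · rintro ⟨j, p⟩
      dsimp only
      simp only [KoszulAux.finC, KoszulAux.finA, hcomm (f j)]
      rw [← add_smul, KoszulAux.finD, zero_smul]
    · rintro ⟨j, p⟩ _ h
      exact Fin.succAbove_ne j p (congrArg Prod.fst h)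
    · rintro ⟨j, p⟩
      dsimp only
      rw [KoszulAux.finA, KoszulAux.finB]
end
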